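/- arXiv:1808.04903 — 3 statements merged into one kernel-verified Lean document; each statement's English description precedes it below -/
import Mathlib

section
/- Let σ be an effective regular action of T_n on the free associative algebra F_n = K⟨z_1,…,z_n⟩ such that each σ(t)(z_i) has zero constant term and the linear part of σ is diagonal, i.e. σ(t)(z_i) = t_1^{m_{i1}}⋯t_n^{m_{in}} z_i + (terms of degree ≥ 2) for an integer matrix [m_{ij}]. Then the integer matrix [m_{ij}] is nonsingular (has nonzero determinant). -/
/-- The coefficient of a free-algebra element at a given word in the generators. -/
noncomputable def coeffW {K : Type*} [CommSemiring K] {n : ℕ}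
    (x : FreeAlgebra K (Fin n)) (w : FreeMonoid (Fin n)) : K :=
  (FreeAlgebra.equivMonoidAlgebraFreeMonoid x).coeff w

/-- Evaluation of a (multivariate) Laurent polynomial `F` at a point `t` of the torus. -/
noncomputable def lEval {K : Type*} [Field K] {r : ℕ}
    (F : (Fin r → ℤ) →₀ K) (t : Fin r → Kˣ) : K :=
  F.sum fun m c => c * ∏ j, ((t j ^ m j : Kˣ) : K)

/-- A regular action of the torus `(Kˣ)^r` on the free algebra `K⟨z_1,…,z_n⟩`:
every coefficient of `σ(t)(z_i)` is a Laurent polynomial function of `t`, and the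
degrees of the `σ(t)(z_i)` are bounded uniformly in `t`. -/
def IsRegularAction {K : Type*} [Field K] {r n : ℕ}
    (σ : (Fin r → Kˣ) →* (FreeAlgebra K (Fin n) ≃ₐ[K] FreeAlgebra K (Fin n))) : Prop :=
  (∀ (i : Fin n) (w : FreeMonoid (Fin n)), ∃ F : (Fin r → ℤ) →₀ K,
      ∀ t, coeffW (σ t (FreeAlgebra.ι K i)) w = lEval F t) ∧
  ∃ N : ℕ, ∀ (t : Fin r → Kˣ) (i : Fin n) (w : FreeMonoid (Fin n)),
      N < w.length → coeffW (σ t (FreeAlgebra.ι K i)) w = 0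

/-!
If `det m = 0`, pick `v ≠ 0` with `m v = 0`. Along the one-parameter subgroup `s ↦ (s ^ v j)_j`
every `σ(s)` has trivial linear part, i.e. is tangent to the identity. For such an action the
coefficient at a word of length `d` of `σ(s)(z_i) - z_i`, once all shorter coefficients vanish,
is an additive function of `s`; it is also a linear combination of characters of `Kˣ`, and by
Dedekind's independence of characters such a function is zero. Inductively `σ(s) = id` for all
`s`, which contradicts effectiveness because `s ^ v j ≠ 1` for some `s` when `K` is infinite.
-/

open FreeAlgebra Submodule

lemma Units.exists_zpow_ne_one {K : Type*} [Field K] [Infinite K] {d : ℤ} (hd : d ≠ 0) :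
    ∃ s : Kˣ, s ^ d ≠ 1 := by
  classical
  by_contra! h
  have hroots : ({0}ᶜ : Set K) ⊆ (Polynomial.nthRoots d.natAbs (1 : K)).toFinset :=
    fun x hx => by
      rw [Finset.mem_coe, Multiset.mem_toFinset, Polynomial.mem_nthRoots (Int.natAbs_pos.mpr hd)]
      have := congrArg Units.val (pow_natAbs_eq_one.mpr (h (Units.mk0 x hx)))
      rwa [Units.val_pow_eq_pow_val, Units.val_one] at this
  exact (Set.finite_singleton 0).infinite_compl ((Finset.finite_toSet _).subset hroots)

lemma Finset.prod_zpow_eq_zpow_sum {ι G : Type*} [CommGroup G] (s : Finset ι) (f : ι → ℤ)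
    (a : G) : ∏ i ∈ s, a ^ f i = a ^ ∑ i ∈ s, f i :=
  Finset.cons_induction (by simp)
    (fun _ _ _ ih => by simp [Finset.prod_cons, Finset.sum_cons, zpow_add, ih]) s

/-- Comparing `f (a * ·) = f + f a • 1` at the trivial character gives `f a = 0`. -/
lemma eq_zero_of_map_mul_of_mem_span_monoidHom {G K : Type*} [Monoid G] [CommRing K] [IsDomain K]
    {f : G → K} (hf : ∀ a b, f (a * b) = f a + f b)
    (hspan : f ∈ span K (Set.range fun χ : G →* K => (χ : G → K))) : f = 0 := by
  classical
  obtain ⟨c, hc⟩ := Finsupp.mem_span_range_iff_exists_finsupp.mp hspan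
  set S := insert 1 c.support
  have heval : ∀ x, f x = ∑ χ ∈ S, c χ * χ x := fun x => by
    rw [← hc, Finsupp.sum_of_support_subset c (Finset.subset_insert 1 _)
      (fun χ r => r • (χ : G → K)) fun _ _ => zero_smul _ _]
    simp only [Finset.sum_apply, Pi.smul_apply, smul_eq_mul, S]
  funext a
  have hcomb :
      ∑ χ ∈ S, (c χ * χ a - c χ - if χ = 1 then f a else 0) • (χ : G → K) = 0 := by
    funext s
    calc (∑ χ ∈ S, (c χ * χ a - c χ - if χ = 1 then f a else 0) • (χ : G → K)) s
        = ∑ χ ∈ S, c χ * χ (a * s) - ∑ χ ∈ S, c χ * χ s - f a := by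
          simp [Finset.sum_apply, sub_mul, Finset.sum_sub_distrib, ite_mul, S, mul_assoc]
      _ = 0 := by rw [← heval, ← heval, hf]; ring
  simpa using linearIndependent_iff'.mp (linearIndependent_monoidHom G K) S _ hcomb 1
    (Finset.mem_insert_self _ _)

namespace FreeAlgebra

section CommSemiring

variable {R X : Type*} [CommSemiring R]

lemma equivMonoidAlgebraFreeMonoid_basisFreeMonoid (u : FreeMonoid X) :
    equivMonoidAlgebraFreeMonoid (basisFreeMonoid R X u) = MonoidAlgebra.of R (FreeMonoid X) u := by
  simp [basisFreeMonoid]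

lemma basisFreeMonoid_one : basisFreeMonoid R X 1 = 1 :=
  equivMonoidAlgebraFreeMonoid.injective <| by
    rw [equivMonoidAlgebraFreeMonoid_basisFreeMonoid, map_one, map_one]

lemma basisFreeMonoid_mul (u v : FreeMonoid X) :
    basisFreeMonoid R X (u * v) = basisFreeMonoid R X u * basisFreeMonoid R X v :=
  equivMonoidAlgebraFreeMonoid.injective <| by
    simp only [map_mul, equivMonoidAlgebraFreeMonoid_basisFreeMonoid]

lemma basisFreeMonoid_of (x : X) : basisFreeMonoid R X (FreeMonoid.of x) = ι R x :=
  equivMonoidAlgebraFreeMonoid.injective <| by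
    rw [equivMonoidAlgebraFreeMonoid_basisFreeMonoid]
    simp [equivMonoidAlgebraFreeMonoid]

variable (R X) in
def orderGE (d : ℕ) : Submodule R (FreeAlgebra R X) :=
  span R (basisFreeMonoid R X '' {u | d ≤ u.length})

lemma mem_orderGE_iff {d : ℕ} {y : FreeAlgebra R X} :
    y ∈ orderGE R X d ↔
      ∀ w : FreeMonoid X, w.length < d → (basisFreeMonoid R X).repr y w = 0 := by
  rw [orderGE, Module.Basis.mem_span_image]
  refine ⟨fun h w hw => ?_, fun h w hw => ?_⟩
  · by_contra hne
    exact (h (Finsupp.mem_support_iff.mpr hne)).not_gt hw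
  · by_contra hlt
    exact Finsupp.mem_support_iff.mp hw (h w (not_le.mp hlt))

lemma orderGE_antitone : Antitone (orderGE R X) := fun _ _ hde =>
  span_mono <| Set.image_mono fun _ hu => le_trans hde hu

lemma orderGE_mul_le (d e : ℕ) : orderGE R X d * orderGE R X e ≤ orderGE R X (d + e) := by
  rw [orderGE, orderGE, span_mul_span]
  refine span_mono ?_
  rintro _ ⟨_, ⟨u, hu, rfl⟩, _, ⟨v, hv, rfl⟩, rfl⟩
  exact ⟨u * v, by simp only [Set.mem_ofPred_eq, FreeMonoid.length_mul] at *; omega,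
    basisFreeMonoid_mul u v⟩

lemma mul_mem_orderGE {d e : ℕ} {y z : FreeAlgebra R X} (hy : y ∈ orderGE R X d)
    (hz : z ∈ orderGE R X e) : y * z ∈ orderGE R X (d + e) :=
  orderGE_mul_le d e (mul_mem_mul hy hz)

lemma basisFreeMonoid_mem_orderGE (u : FreeMonoid X) :
    basisFreeMonoid R X u ∈ orderGE R X u.length :=
  subset_span ⟨u, le_refl u.length, rfl⟩

lemma ι_mem_orderGE_one (x : X) : ι R x ∈ orderGE R X 1 := by
  simpa [basisFreeMonoid_of] using basisFreeMonoid_mem_orderGE (R := R) (FreeMonoid.of x)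

lemma eq_zero_of_forall_mem_orderGE {y : FreeAlgebra R X} (h : ∀ d, y ∈ orderGE R X d) :
    y = 0 :=
  (basisFreeMonoid R X).repr.injective <| Finsupp.ext fun w => by
    simpa using mem_orderGE_iff.mp (h (w.length + 1)) w (Nat.lt_succ_self _)

end CommSemiring

section CommRing

variable {R X : Type*} [CommRing R]

lemma sub_ι_mem_orderGE_two [DecidableEq X] {y : FreeAlgebra R X} {x : X}
    (h0 : (basisFreeMonoid R X).repr y 1 = 0)
    (h1 : ∀ x', (basisFreeMonoid R X).repr y (FreeMonoid.of x') = if x' = x then 1 else 0) :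
    y - ι R x ∈ orderGE R X 2 := by
  classical
  refine mem_orderGE_iff.mpr fun w hw => ?_
  rw [map_sub, Finsupp.sub_apply, ← basisFreeMonoid_of, Module.Basis.repr_self,
    Finsupp.single_apply]
  rcases (by omega : w.length = 0 ∨ w.length = 1) with hw | hw
  · obtain rfl := FreeMonoid.length_eq_zero.mp hw
    simp [h0]
  · obtain ⟨x', rfl⟩ := FreeMonoid.length_eq_one.mp hw
    by_cases hx : x' = x <;> simp [h1, hx, FreeMonoid.of_injective.eq_iff, Ne.symm]

variable {F : Type*} [FunLike F (FreeAlgebra R X) (FreeAlgebra R X)]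
  [AlgHomClass F R (FreeAlgebra R X) (FreeAlgebra R X)]
  {φ : F} (hφ : ∀ x, φ (ι R x) - ι R x ∈ orderGE R X 2)
include hφ

lemma map_basisFreeMonoid_sub_mem_orderGE (u : FreeMonoid X) :
    φ (basisFreeMonoid R X u) - basisFreeMonoid R X u ∈ orderGE R X (u.length + 1) := by
  induction u using FreeMonoid.recOn with
  | one => simp [basisFreeMonoid_one]
  | of_mul x u ih =>
    have hu : φ (basisFreeMonoid R X u) ∈ orderGE R X u.length := by
      simpa using add_mem (orderGE_antitone (Nat.le_succ _) ih) (basisFreeMonoid_mem_orderGE u)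
    have hsplit : φ (basisFreeMonoid R X (.of x * u)) - basisFreeMonoid R X (.of x * u)
        = (φ (ι R x) - ι R x) * φ (basisFreeMonoid R X u)
          + ι R x * (φ (basisFreeMonoid R X u) - basisFreeMonoid R X u) := by
      rw [basisFreeMonoid_mul, basisFreeMonoid_of, map_mul]; noncomm_ring
    rw [hsplit, FreeMonoid.length_mul, FreeMonoid.length_of]
    refine add_mem (orderGE_antitone ?_ (mul_mem_orderGE (hφ x) hu))
      (orderGE_antitone ?_ (mul_mem_orderGE (ι_mem_orderGE_one x) ih)) <;> omega

lemma map_sub_mem_orderGE_succ {d : ℕ} {y : FreeAlgebra R X} (hy : y ∈ orderGE R X d) :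
    φ y - y ∈ orderGE R X (d + 1) := by
  suffices orderGE R X d ≤
      (orderGE R X (d + 1)).comap ((φ : FreeAlgebra R X →ₗ[R] _) - LinearMap.id) from this hy
  refine span_le.mpr ?_
  rintro _ ⟨u, hu, rfl⟩
  exact orderGE_antitone (Nat.succ_le_succ hu) (map_basisFreeMonoid_sub_mem_orderGE hφ u)

lemma repr_map_sub_eq_add {w : FreeMonoid X} {y z : FreeAlgebra R X}
    (hyz : y - z ∈ orderGE R X w.length) :
    (basisFreeMonoid R X).repr (φ y - z) w =
      (basisFreeMonoid R X).repr (φ z - z) w + (basisFreeMonoid R X).repr (y - z) w := by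
  have hsplit : φ y - z = (φ z - z) + (φ (y - z) - (y - z)) + (y - z) := by
    rw [map_sub]; abel
  rw [hsplit, map_add, map_add, Finsupp.add_apply, Finsupp.add_apply,
    mem_orderGE_iff.mp (map_sub_mem_orderGE_succ hφ hyz) w (Nat.lt_succ_self _), add_zero]

end CommRing

theorem eq_one_of_tangent_to_id {G R X : Type*} [Monoid G] [CommRing R] [IsDomain R]
    (ψ : G →* (FreeAlgebra R X ≃ₐ[R] FreeAlgebra R X))
    (htan : ∀ g x, ψ g (ι R x) - ι R x ∈ orderGE R X 2)
    (hcoeff : ∀ x w, (fun g => (basisFreeMonoid R X).repr (ψ g (ι R x)) w) ∈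
      span R (Set.range fun χ : G →* R => (χ : G → R))) :
    ψ = 1 := by
  have hall : ∀ d g x, ψ g (ι R x) - ι R x ∈ orderGE R X d := by
    intro d
    induction d with
    | zero => simp [mem_orderGE_iff]
    | succ d hd =>
      intro g x
      refine mem_orderGE_iff.mpr fun w hw => ?_
      rcases (Nat.lt_succ_iff.mp hw).lt_or_eq with hlt | rfl
      · exact mem_orderGE_iff.mp (hd g x) w hlt
      let f : G → R := fun g => (basisFreeMonoid R X).repr (ψ g (ι R x) - ι R x) w
      have hadd : ∀ a b, f (a * b) = f a + f b := fun a b => by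
        simpa only [f, map_mul, AlgEquiv.mul_apply] using
          repr_map_sub_eq_add (htan a) (hd b x)
      have hspan : f ∈ span R (Set.range fun χ : G →* R => (χ : G → R)) := by
        have := sub_mem (hcoeff x w) (smul_mem _ ((basisFreeMonoid R X).repr (ι R x) w)
          (subset_span (Set.mem_range_self 1)))
        convert this using 1
        funext g; simp [f]
      exact congrFun (eq_zero_of_map_mul_of_mem_span_monoidHom hadd hspan) g
  ext g y : 2
  have hfix : (ψ g : FreeAlgebra R X →ₐ[R] FreeAlgebra R X) = AlgHom.id R _ :=
    hom_ext <| funext fun x => sub_eq_zero.mp <| eq_zero_of_forall_mem_orderGE fun d => hall d g x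
  exact DFunLike.congr_fun hfix y

end FreeAlgebra

section Torus

variable {K ι : Type*} [Field K] [Fintype ι]

variable (K) in
noncomputable def torusChar (μ : ι → ℤ) : (ι → Kˣ) →* K :=
  ∏ j, (Units.coeHom K).comp ((zpowGroupHom (μ j)).comp (Pi.evalMonoidHom _ j))

lemma torusChar_apply (μ : ι → ℤ) (t : ι → Kˣ) :
    torusChar K μ t = ∏ j, ((t j ^ μ j : Kˣ) : K) := by
  simp [torusChar, MonoidHom.finsetProd_apply]

lemma torusChar_apply_zpow (μ v : ι → ℤ) (s : Kˣ) :
    torusChar K μ (fun j => s ^ v j) = ((s ^ ∑ j, v j * μ j : Kˣ) : K) := by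
  simp only [torusChar_apply, ← zpow_mul, ← Units.coe_prod, Finset.prod_zpow_eq_zpow_sum]

lemma lEval_comp_mem_span {G : Type*} [Monoid G] {r : ℕ} (F : (Fin r → ℤ) →₀ K)
    (γ : G →* (Fin r → Kˣ)) :
    (fun g => lEval F (γ g)) ∈ span K (Set.range fun χ : G →* K => (χ : G → K)) := by
  have : (fun g => lEval F (γ g)) =
      ∑ μ ∈ F.support, F μ • ⇑((torusChar K μ).comp γ) := by
    funext g
    simp [lEval, Finsupp.sum, torusChar_apply, Finset.sum_apply]
  rw [this]
  exact sum_mem fun μ _ => smul_mem _ _ (subset_span (Set.mem_range_self _))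

end Torus

lemma coeffW_eq_repr {K : Type*} [CommSemiring K] {n : ℕ} (y : FreeAlgebra K (Fin n))
    (w : FreeMonoid (Fin n)) : coeffW y w = (basisFreeMonoid K (Fin n)).repr y w :=
  rfl

/-- If an effective regular torus action on the free algebra has zero constant terms and
diagonal linear part `σ(t)(z_i) = t_1^{m i 1} ⋯ t_n^{m i n} z_i + (degree ≥ 2)`, then the
integer power matrix `[m i j]` is nonsingular. -/
theorem power_matrix_nonsingular
    {K : Type*} [Field K] [IsAlgClosed K] (n : ℕ)
    (σ : (Fin n → Kˣ) →* (FreeAlgebra K (Fin n) ≃ₐ[K] FreeAlgebra K (Fin n)))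
    (hreg : IsRegularAction σ) (heff : Function.Injective σ)
    (m : Matrix (Fin n) (Fin n) ℤ)
    (hconst : ∀ (t : Fin n → Kˣ) (i : Fin n), coeffW (σ t (FreeAlgebra.ι K i)) 1 = 0)
    (hlin : ∀ (t : Fin n → Kˣ) (i j : Fin n),
      coeffW (σ t (FreeAlgebra.ι K i)) (FreeMonoid.of j) =
        if j = i then ∏ k, ((t k ^ m i k : Kˣ) : K) else 0) :
    m.det ≠ 0 := by
  intro hdet
  obtain ⟨v, hv0, hv⟩ := Matrix.exists_mulVec_eq_zero_iff.mpr hdet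
  let γ : Kˣ →* (Fin n → Kˣ) := MonoidHom.pi fun j => zpowGroupHom (v j)
  have hlin_triv : ∀ s i, ∏ k, ((γ s k ^ m i k : Kˣ) : K) = 1 := fun s i => by
    have hker : ∑ k, v k * m i k = 0 := by
      simpa [Matrix.mulVec, dotProduct, mul_comm] using congrFun hv i
    rw [← torusChar_apply, show γ s = fun j => s ^ v j from rfl, torusChar_apply_zpow, hker,
      zpow_zero, Units.val_one]
  have hγ_triv : σ.comp γ = 1 := by
    refine eq_one_of_tangent_to_id _ (fun s i => ?_) (fun i w => ?_)
    · exact sub_ι_mem_orderGE_two (hconst _ i) fun j => by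
        rw [← coeffW_eq_repr, MonoidHom.comp_apply, hlin, hlin_triv]
    · obtain ⟨F, hF⟩ := hreg.1 i w
      simpa [← coeffW_eq_repr, hF] using lEval_comp_mem_span F γ
  obtain ⟨j, hj⟩ : ∃ j, v j ≠ 0 := Function.ne_iff.mp hv0
  obtain ⟨s, hs⟩ := Units.exists_zpow_ne_one (K := K) hj
  have hγ : γ s = 1 := heff ((DFunLike.congr_fun hγ_triv s).trans (map_one σ).symm)
  exact hs (congrFun hγ j)
end

section
/- (Białynicki-Birula) Any regular action of the n-dimensional torus T_n on the affine space A^n over an algebraically closed field K has a fixed point: there exists a point p ∈ K^n with σ(t, p) = p for all t ∈ T_n. -/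
/-- A map of affine `m`-space is a polynomial map if each component is given by a
polynomial in the coordinates. -/
def IsPolyMap {K : Type*} [CommSemiring K] {m : ℕ} (f : (Fin m → K) → (Fin m → K)) : Prop :=
  ∃ p : Fin m → MvPolynomial (Fin m) K, ∀ x i, f x i = MvPolynomial.eval x (p i)

/-- A regular torus action on affine space: each component of `σ t x` is a polynomial
in the coordinates `x` whose coefficients are Laurent polynomial functions of `t`. -/
def IsRegularAffineAction {K : Type*} [Field K] {r m : ℕ}
    (σ : (Fin r → Kˣ) → (Fin m → K) → (Fin m → K)) : Prop :=
  ∃ P : Fin m → ((Fin m →₀ ℕ) →₀ ((Fin r → ℤ) →₀ K)),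
    ∀ t x i, σ t x i = (P i).sum fun d F => lEval F t * ∏ j, x j ^ d j

/-!
Choose a prime `ℓ` invertible in `K` and let `Γ` be the `ℓ`-power torsion of the torus. Distinct
characters of the torus remain distinct, hence linearly independent, on `Γ`; so `Γ` is Zariski
dense and a point fixed by `Γ` is fixed by the whole torus.

A point fixed by `Γ` exists by the Nullstellensatz unless the equations `g • x = x` (`g ∈ Γ`)
generate the unit ideal. A relation witnessing this involves only a finite `ℓ`-subgroup and
finitely many coefficients, so it descends to a finitely generated `ℤ`-algebra containing `1/ℓ`,
and then to a finite residue field `F` of characteristic `≠ ℓ`. There it is absurd: an `ℓ`-group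
acting on `Fⁿ`, whose cardinality is prime to `ℓ`, has a fixed point, where the relation
evaluates to `0 = 1`.
-/

open MvPolynomial

section PolyAction

variable {G ι R S : Type*} [CommRing R] [CommRing S]

noncomputable def fixedPointIdeal (q : G → ι → MvPolynomial ι R) : Ideal (MvPolynomial ι R) :=
  Ideal.span (Set.range fun gi : G × ι => q gi.1 gi.2 - X gi.2)

theorem map_fixedPointIdeal (q : G → ι → MvPolynomial ι R) (f : R →+* S) :
    Ideal.map (map f) (fixedPointIdeal q) = fixedPointIdeal fun g i => map f (q g i) := by
  rw [fixedPointIdeal, fixedPointIdeal, Ideal.map_span, ← Set.range_comp]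
  congr 1
  ext
  simp

theorem fixedPointIdeal_ne_top_of_forall_eval_eq [Nontrivial R] {q : G → ι → MvPolynomial ι R}
    (x : ι → R) (hx : ∀ g i, eval x (q g i) = x i) : fixedPointIdeal q ≠ ⊤ := by
  refine ne_top_of_le_ne_top (RingHom.ker_ne_top (eval x)) (Ideal.span_le.mpr ?_)
  rintro _ ⟨⟨g, i⟩, rfl⟩
  simp [hx]

theorem eval_bind₁ (x : ι → R) (f : ι → MvPolynomial ι R) (p : MvPolynomial ι R) :
    eval x (bind₁ f p) = eval (fun i => eval x (f i)) p :=
  eval₂Hom_bind₁ _ _ _ _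

variable [Monoid G]

/-- `q g i` is the `i`-th coordinate of `x ↦ g • x`; as `bind₁` is substitution, the second
condition says `(g * h) • x = g • (h • x)`. -/
def IsPolyAction (q : G → ι → MvPolynomial ι R) : Prop :=
  (∀ i, q 1 i = X i) ∧ ∀ g h i, q (g * h) i = bind₁ (q h) (q g i)

namespace IsPolyAction

variable {q : G → ι → MvPolynomial ι R}

theorem map (hq : IsPolyAction q) (f : R →+* S) : IsPolyAction fun g i => map f (q g i) :=
  ⟨fun i => by simp only [hq.1, map_X], fun g h i => by simp only [hq.2, map_bind₁]⟩

theorem of_map {f : R →+* S} (hf : Function.Injective f)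
    (hq : IsPolyAction fun g i => MvPolynomial.map f (q g i)) : IsPolyAction q :=
  ⟨fun i => map_injective f hf (by simpa using hq.1 i),
    fun g h i => map_injective f hf (by simpa [map_bind₁] using hq.2 g h i)⟩

theorem comp_monoidHom {H : Type*} [Monoid H] (hq : IsPolyAction q) (f : H →* G) :
    IsPolyAction fun h => q (f h) :=
  ⟨fun i => by simp only [map_one, hq.1], fun g h i => by simp only [map_mul, hq.2]⟩

noncomputable abbrev mulAction (hq : IsPolyAction q) : MulAction G (ι → R) where
  smul g x i := eval x (q g i)
  one_smul x := funext fun i => show eval x (q 1 i) = x i by rw [hq.1, eval_X]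
  mul_smul g h x := funext fun i => show eval x (q (g * h) i) = _ by rw [hq.2, eval_bind₁]; rfl

theorem of_eval_eq [IsDomain R] [Infinite R] {σ : G → (ι → R) → ι → R}
    (hid : ∀ x, σ 1 x = x) (hcomp : ∀ g h x, σ g (σ h x) = σ (g * h) x)
    (hq : ∀ g x i, σ g x i = eval x (q g i)) : IsPolyAction q := by
  refine ⟨fun i => MvPolynomial.funext fun x => ?_, fun g h i => MvPolynomial.funext fun x => ?_⟩
  · rw [← hq, hid, eval_X]
  · simp only [eval_bind₁, ← hq, hcomp]

end IsPolyAction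

end PolyAction

theorem natCast_eq_zero_of_dvd_card {F M : Type*} [Field F] [AddCommGroup M] [Module F M]
    [Finite M] {ℓ : ℕ} [Fact ℓ.Prime] (h : ℓ ∣ Nat.card M) : (ℓ : F) = 0 := by
  obtain ⟨x, hx⟩ := exists_prime_addOrderOf_dvd_card' ℓ h
  have hx0 : x ≠ 0 := by
    rintro rfl
    exact (Fact.out : ℓ.Prime).one_lt.ne' (hx.symm.trans addOrderOf_zero)
  have hℓx : (ℓ : F) • x = 0 := by rw [Nat.cast_smul_eq_nsmul, ← hx, addOrderOf_nsmul_eq_zero]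
  exact (smul_eq_zero.mp hℓx).resolve_right hx0

theorem IsPolyAction.fixedPointIdeal_ne_top_of_finite_field {G ι F : Type*} [Group G] [Finite ι]
    [Field F] [Finite F] {ℓ : ℕ} [Fact ℓ.Prime] (hG : IsPGroup ℓ G) (hℓ : (ℓ : F) ≠ 0)
    {q : G → ι → MvPolynomial ι F} (hq : IsPolyAction q) : fixedPointIdeal q ≠ ⊤ := by
  let := hq.mulAction
  obtain ⟨x, hx⟩ := hG.nonempty_fixed_point_of_prime_not_dvd_card (ι → F)
    (mt natCast_eq_zero_of_dvd_card hℓ)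
  exact fixedPointIdeal_ne_top_of_forall_eval_eq x fun g i => congrFun (hx g) i

instance Int.isJacobsonRing : IsJacobsonRing ℤ := by
  refine isJacobsonRing_iff_prime_eq.mpr fun P hP => ?_
  rcases eq_or_ne P ⊥ with rfl | hbot
  · refine le_antisymm (fun x hx => ?_) Ideal.le_jacobson
    have h₁ := Int.isUnit_iff.mp (Ideal.mem_jacobson_bot.mp hx 1)
    have h₂ := Int.isUnit_iff.mp (Ideal.mem_jacobson_bot.mp hx (-1))
    rw [Ideal.mem_bot]
    omega
  · have := hP.isMaximal hbot
    exact Ideal.jacobson_eq_self_of_isMaximal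

theorem finite_of_finiteType_int (F : Type*) [Field F] [Algebra.FiniteType ℤ F] : Finite F := by
  have := finite_of_finite_type_of_isJacobsonRing ℤ F
  have hchar : ringChar F ≠ 0 := by
    intro h
    have : CharP F 0 := h ▸ ringChar.charP F
    have := CharP.charP_to_charZero F
    exact Int.not_isField <| (Algebra.IsIntegral.isField_iff_isField
      (algebraMap ℤ F).injective_int).mpr (Field.toIsField F)
  refine Module.finite_of_fg_torsion F fun x => ⟨⟨ringChar F, ?_⟩, ?_⟩
  · exact mem_nonZeroDivisors_of_ne_zero (by exact_mod_cast hchar)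
  · simp [Submonoid.smul_def]

theorem IsPolyAction.fixedPointIdeal_ne_top_of_finiteType {G ι A : Type*} [Group G] [Finite ι]
    [CommRing A] [Nontrivial A] [Algebra.FiniteType ℤ A] {ℓ : ℕ} [Fact ℓ.Prime]
    (hG : IsPGroup ℓ G) (hℓ : IsUnit (ℓ : A))
    {q : G → ι → MvPolynomial ι A} (hq : IsPolyAction q) : fixedPointIdeal q ≠ ⊤ := by
  obtain ⟨𝔪, h𝔪⟩ := Ideal.exists_maximal A
  let := Ideal.Quotient.field 𝔪
  -- `toIntAlgHom` produces the `ℤ`-algebra structure that the field instance induces,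
  -- which is not reducibly the quotient's own.
  have := @finite_of_finiteType_int (A ⧸ 𝔪) _
    (.of_surjective (Ideal.Quotient.mk 𝔪).toIntAlgHom Ideal.Quotient.mk_surjective)
  have hℓ' : (ℓ : A ⧸ 𝔪) ≠ 0 := by simpa using (hℓ.map (Ideal.Quotient.mk 𝔪)).ne_zero
  intro htop
  apply (hq.map (Ideal.Quotient.mk 𝔪)).fixedPointIdeal_ne_top_of_finite_field hG hℓ'
  rw [← map_fixedPointIdeal, htop, Ideal.map_top]

theorem exists_fg_subalgebra_int_mem_range_map {ι K : Type*} [CommRing K] {s : Set K}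
    (hs : s.Finite) {T : Set (MvPolynomial ι K)} (hT : T.Finite) :
    ∃ A : Subalgebra ℤ K, A.FG ∧ s ⊆ A ∧ ∀ p ∈ T, p ∈ Set.range (map (algebraMap A K)) := by
  refine ⟨Algebra.adjoin ℤ (s ∪ ⋃ p ∈ T, p.coeffs), Subalgebra.fg_def.mpr ⟨_, ?_, rfl⟩,
    fun x hx => Algebra.subset_adjoin (Or.inl hx), fun p hp => ?_⟩
  · exact hs.union (hT.biUnion fun p _ => p.coeffs.finite_toSet)
  · rw [mem_range_map_iff_coeffs_subset, Subalgebra.setRange_algebraMap]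
    exact fun x hx => Algebra.subset_adjoin (Or.inr (Set.mem_biUnion hp hx))

theorem IsPolyAction.fixedPointIdeal_ne_top_of_finite_group {G ι K : Type*} [Group G] [Finite G]
    [Finite ι] [Field K] {ℓ : ℕ} [Fact ℓ.Prime] (hG : IsPGroup ℓ G) (hℓ : (ℓ : K) ≠ 0)
    {q : G → ι → MvPolynomial ι K} (hq : IsPolyAction q) : fixedPointIdeal q ≠ ⊤ := by
  have := Fintype.ofFinite G
  have := Fintype.ofFinite ι
  intro htop
  obtain ⟨c, hc⟩ := Ideal.mem_span_range_iff_exists_fun.mp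
    (htop ▸ Submodule.mem_top : (1 : MvPolynomial ι K) ∈ fixedPointIdeal q)
  obtain ⟨A, hAfg, hℓA, hlift⟩ :=
    exists_fg_subalgebra_int_mem_range_map (Set.finite_singleton (ℓ : K)⁻¹)
    ((Set.finite_range fun gi : G × ι => q gi.1 gi.2).union (Set.finite_range c))
  choose q' hq' using fun g i => hlift _ (Or.inl ⟨(g, i), rfl⟩)
  choose c' hc' using fun gi => hlift _ (Or.inr ⟨gi, rfl⟩)
  have hinj : Function.Injective (MvPolynomial.map (σ := ι) (algebraMap A K)) :=
    map_injective _ Subtype.val_injective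
  have hq'act : IsPolyAction q' :=
    .of_map (f := algebraMap A K) Subtype.val_injective (by simpa only [hq'] using hq)
  have hc'sum : ∑ gi, c' gi * (q' gi.1 gi.2 - X gi.2) = 1 :=
    hinj (by simpa [hq', hc'] using hc)
  have hℓunit : IsUnit (ℓ : A) :=
    IsUnit.of_mul_eq_one (⟨_, hℓA rfl⟩ : A) (Subtype.ext (mul_inv_cancel₀ hℓ))
  have := (Subalgebra.fg_iff_finiteType A).mp hAfg
  exact hq'act.fixedPointIdeal_ne_top_of_finiteType hG hℓunit
    (Ideal.eq_top_of_isUnit_mem _ (Ideal.mem_span_range_iff_exists_fun.mpr ⟨c', hc'sum⟩) isUnit_one)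

theorem IsPolyAction.fixedPointIdeal_ne_top_of_commGroup {G ι K : Type*} [CommGroup G] [Finite ι]
    [Field K] {ℓ : ℕ} [Fact ℓ.Prime] (hG : IsPGroup ℓ G) (hℓ : (ℓ : K) ≠ 0)
    {q : G → ι → MvPolynomial ι K} (hq : IsPolyAction q) : fixedPointIdeal q ≠ ⊤ := by
  intro htop
  obtain ⟨T, hTsub, hT⟩ := Submodule.mem_span_finite_of_mem_span
    (htop ▸ Submodule.mem_top : (1 : MvPolynomial ι K) ∈ fixedPointIdeal q)
  choose gi hgi using fun p : T => hTsub p.2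
  let H := Subgroup.closure (Set.range fun p : T => (gi p).1)
  have hH : IsMulTorsion H := fun h => (hG.to_subgroup H h).elim fun k hk =>
    isOfFinOrder_iff_pow_eq_one.mpr ⟨ℓ ^ k, pow_pos (Fact.out : ℓ.Prime).pos k, hk⟩
  have : Finite H := CommGroup.finite_of_fg_isMulTorsion H hH
  refine (hq.comp_monoidHom H.subtype).fixedPointIdeal_ne_top_of_finite_group (hG.to_subgroup H) hℓ
    ((Ideal.eq_top_iff_one _).mpr (Submodule.span_mono ?_ hT))
  intro p hp
  exact ⟨(⟨(gi ⟨p, hp⟩).1, Subgroup.subset_closure ⟨_, rfl⟩⟩, (gi ⟨p, hp⟩).2), hgi _⟩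

theorem exists_forall_eval_eq_of_fixedPointIdeal_ne_top {G ι K : Type*} [Field K] [IsAlgClosed K]
    [Finite ι] {q : G → ι → MvPolynomial ι K} (h : fixedPointIdeal q ≠ ⊤) :
    ∃ x, ∀ g i, eval x (q g i) = x i := by
  obtain ⟨M, hM, hle⟩ := Ideal.exists_le_maximal _ h
  obtain ⟨x, rfl⟩ := isMaximal_iff_eq_vanishingIdeal_singleton.mp hM
  refine ⟨x, fun g i => sub_eq_zero.mp ?_⟩
  simpa using (mem_vanishingIdeal_singleton_iff x _).mp (hle (Ideal.subset_span ⟨(g, i), rfl⟩))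

theorem IsPolyAction.exists_fixed_point_of_isPGroup {G ι K : Type*} [CommGroup G] [Finite ι]
    [Field K] [IsAlgClosed K] {ℓ : ℕ} [Fact ℓ.Prime] (hG : IsPGroup ℓ G) (hℓ : (ℓ : K) ≠ 0)
    {q : G → ι → MvPolynomial ι K} (hq : IsPolyAction q) : ∃ x, ∀ g i, eval x (q g i) = x i :=
  exists_forall_eval_eq_of_fixedPointIdeal_ne_top (hq.fixedPointIdeal_ne_top_of_commGroup hG hℓ)

theorem exists_prime_natCast_ne_zero (K : Type*) [Ring K] [Nontrivial K] :
    ∃ ℓ : ℕ, ℓ.Prime ∧ (ℓ : K) ≠ 0 := by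
  obtain ⟨ℓ, hle, hℓ⟩ := Nat.exists_infinite_primes (ringChar K + 1)
  refine ⟨ℓ, hℓ, fun h => ?_⟩
  rcases hℓ.eq_one_or_self_of_dvd _ ((ringChar.spec K ℓ).mp h) with h1 | h1
  · exact CharP.ringChar_ne_one h1
  · omega

section Torus

variable {K ι : Type*} [Field K] [Fintype ι]

noncomputable def torusCharacter (m : ι → ℤ) : (ι → Kˣ) →* K where
  toFun t := ∏ j, ((t j ^ m j : Kˣ) : K)
  map_one' := by simp
  map_mul' t s := by simp [mul_zpow, Finset.prod_mul_distrib]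

theorem torusCharacter_mulSingle [DecidableEq ι] (m : ι → ℤ) (j : ι) (u : Kˣ) :
    torusCharacter m (Pi.mulSingle j u) = ((u ^ m j : Kˣ) : K) := by
  rw [torusCharacter, MonoidHom.coe_mk, OneHom.coe_mk, Finset.prod_eq_single j]
  · simp
  · intro j' _ hj'
    simp [Pi.mulSingle_eq_of_ne hj']
  · simp

theorem eq_of_torusCharacter_eq_on_primaryComponent [IsAlgClosed K] {ℓ : ℕ} (hℓ1 : 1 < ℓ)
    (hℓ : (ℓ : K) ≠ 0) {m m' : ι → ℤ}
    (h : ∀ t ∈ CommGroup.primaryComponent (ι → Kˣ) ℓ, torusCharacter m t = torusCharacter m' t) :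
    m = m' := by
  classical
  by_contra hne
  obtain ⟨j, hj⟩ := Function.ne_iff.mp hne
  set k := (m j - m' j).natAbs
  have : NeZero ((ℓ ^ k : ℕ) : K) := ⟨by simpa using pow_ne_zero k hℓ⟩
  obtain ⟨ζ, hζ⟩ := HasEnoughRootsOfUnity.exists_primitiveRoot K (ℓ ^ k)
  have hℓk : ℓ ^ k ≠ 0 := pow_ne_zero k (by omega)
  have hζu := hζ.isUnit_unit hℓk
  have hmem : Pi.mulSingle j (hζ.isUnit hℓk).unit ∈ CommGroup.primaryComponent (ι → Kˣ) ℓ :=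
    ⟨k, by rw [← Pi.mulSingle_pow, hζu.pow_eq_one, Pi.mulSingle_one]⟩
  have hpow := h _ hmem
  rw [torusCharacter_mulSingle, torusCharacter_mulSingle, Units.val_inj] at hpow
  replace hpow : ((ℓ ^ k : ℕ) : ℤ) ∣ m j - m' j := by
    rw [← hζu.zpow_eq_one_iff_dvd, zpow_sub, hpow, mul_inv_cancel]
  exact (Nat.lt_pow_self hℓ1).not_ge
    (Nat.le_of_dvd (Int.natAbs_pos.mpr (sub_ne_zero.mpr hj)) (Int.natCast_dvd.mp hpow))

theorem lEval_eq_linearCombination {r : ℕ} (F : (Fin r → ℤ) →₀ K) (t : Fin r → Kˣ) :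
    lEval F t = Finsupp.linearCombination K (fun m => torusCharacter m t) F :=
  rfl

theorem lEval_sub_single_zero {r : ℕ} (F : (Fin r → ℤ) →₀ K) (c : K) (t : Fin r → Kˣ) :
    lEval (F - Finsupp.single 0 c) t = lEval F t - c := by
  simp [lEval_eq_linearCombination, map_sub, torusCharacter]

theorem eq_zero_of_lEval_eq_zero_on_primaryComponent [IsAlgClosed K] {ℓ : ℕ} (hℓ1 : 1 < ℓ)
    (hℓ : (ℓ : K) ≠ 0) {r : ℕ} {F : (Fin r → ℤ) →₀ K}
    (h : ∀ t ∈ CommGroup.primaryComponent (Fin r → Kˣ) ℓ, lEval F t = 0) : F = 0 := by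
  let Γ := CommGroup.primaryComponent (Fin r → Kˣ) ℓ
  let χ (m : Fin r → ℤ) : Γ →* K := (torusCharacter m).comp Γ.subtype
  have hχ : Function.Injective χ := fun m m' hm =>
    eq_of_torusCharacter_eq_on_primaryComponent hℓ1 hℓ fun t ht => DFunLike.congr_fun hm ⟨t, ht⟩
  refine linearIndependent_iff.mp ((linearIndependent_monoidHom Γ K).comp χ hχ) F ?_
  ext t
  simpa [χ, Finsupp.linearCombination_apply, Finsupp.sum, lEval_eq_linearCombination] using h t t.2

end Torus

section RegularAction

variable {K : Type*} [Field K] {r m : ℕ} {σ : (Fin r → Kˣ) → (Fin m → K) → (Fin m → K)}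

theorem IsRegularAffineAction.isPolyMap (hσ : IsRegularAffineAction σ) (t : Fin r → Kˣ) :
    IsPolyMap (σ t) := by
  obtain ⟨P, hP⟩ := hσ
  exact ⟨fun i => (P i).sum fun d F => C (lEval F t) * ∏ j, X j ^ d j, fun x i => by
    simp [hP, Finsupp.sum]⟩

theorem IsRegularAffineAction.exists_lEval_eq (hσ : IsRegularAffineAction σ) (x : Fin m → K)
    (i : Fin m) : ∃ F : (Fin r → ℤ) →₀ K, ∀ t, lEval F t = σ t x i := by
  obtain ⟨P, hP⟩ := hσ
  refine ⟨(P i).sum fun d F => (∏ j, x j ^ d j) • F, fun t => ?_⟩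
  simp [hP, lEval_eq_linearCombination, Finsupp.sum, map_sum, mul_comm]

theorem IsRegularAffineAction.apply_eq_of_forall_mem_primaryComponent [IsAlgClosed K]
    (hσ : IsRegularAffineAction σ) {ℓ : ℕ} (hℓ1 : 1 < ℓ) (hℓ : (ℓ : K) ≠ 0) {p : Fin m → K}
    (hp : ∀ s ∈ CommGroup.primaryComponent (Fin r → Kˣ) ℓ, σ s p = p) (t : Fin r → Kˣ) :
    σ t p = p := by
  funext i
  obtain ⟨F, hF⟩ := hσ.exists_lEval_eq p i
  have hF0 : F - Finsupp.single 0 (p i) = 0 :=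
    eq_zero_of_lEval_eq_zero_on_primaryComponent hℓ1 hℓ fun s hs => by
      rw [lEval_sub_single_zero, hF, hp s hs, sub_self]
  have := congrArg (lEval · t) hF0
  rwa [lEval_sub_single_zero, hF, lEval_eq_linearCombination 0, map_zero, sub_eq_zero] at this

end RegularAction

/-- **(Białynicki-Birula)** Any regular action of the `n`-dimensional torus on affine
`n`-space over an algebraically closed field has a fixed point. -/
theorem torus_action_on_affine_space_has_fixed_point
    {K : Type*} [Field K] [IsAlgClosed K] (n : ℕ)
    (σ : (Fin n → Kˣ) → (Fin n → K) → (Fin n → K))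
    (hid : ∀ x, σ 1 x = x)
    (hcomp : ∀ t₁ t₂ x, σ t₁ (σ t₂ x) = σ (t₁ * t₂) x)
    (hreg : IsRegularAffineAction σ) :
    ∃ p : Fin n → K, ∀ t, σ t p = p := by
  obtain ⟨ℓ, hℓ, hℓK⟩ := exists_prime_natCast_ne_zero K
  have : Fact ℓ.Prime := ⟨hℓ⟩
  choose q hq using hreg.isPolyMap
  have hqact : IsPolyAction q := .of_eval_eq hid hcomp hq
  let Γ := CommGroup.primaryComponent (Fin n → Kˣ) ℓ
  obtain ⟨p, hp⟩ := (hqact.comp_monoidHom Γ.subtype).exists_fixed_point_of_isPGroup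
    CommGroup.primaryComponent.isPGroup hℓK
  refine ⟨p, hreg.apply_eq_of_forall_mem_primaryComponent hℓ.one_lt hℓK fun s hs => ?_⟩
  funext i
  rw [hq]
  exact hp ⟨s, hs⟩ i
end

section
/- Let σ be a regular action of a torus T (a subtorus T_1 ≅ K^× suffices) on F_n = K⟨z_1,…,z_n⟩ by K-algebra automorphisms such that for every t ∈ T and every i, σ(t)(z_i) = z_i + (terms of degree ≥ 2). Then σ(t) is the identity automorphism for every t ∈ T (so such an action cannot be effective unless T is trivial). -/
theorem linearIndependent_fun_pow (R : Type*) [CommRing R] [IsDomain R] :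
    LinearIndependent R (fun (a : R) (k : ℕ) => a ^ k) :=
  (linearIndependent_monoidHom (Multiplicative ℕ) R).comp (powersHom R) (powersHom R).injective

theorem Finsupp.eq_zero_of_sum_mul_pow_eq_natCast_mul {R : Type*} [CommRing R] [IsDomain R]
    (l : R →₀ R) (a : R) (h : ∀ k : ℕ, (l.sum fun v c => c * v ^ k) = k * a) : a = 0 := by
  classical
  have hdiff (k : ℕ) : ∑ v ∈ insert 1 l.support, l v * (v - 1) * v ^ k = a := by
    rw [Finset.sum_insert_of_eq_zero_if_notMem (by simp)]
    calc ∑ v ∈ l.support, l v * (v - 1) * v ^ k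
        = (l.sum fun v c => c * v ^ (k + 1)) - l.sum fun v c => c * v ^ k := by
          simp only [Finsupp.sum, ← Finset.sum_sub_distrib]; ring_nf
      _ = a := by rw [h, h]; push_cast; ring
  have hcomb := linearIndependent_iff'.mp (linearIndependent_fun_pow R) (insert 1 l.support)
    (fun v => l v * (v - 1) - if v = 1 then a else 0) (funext fun k => by
      simp [sub_smul, Finset.sum_sub_distrib, hdiff, Finset.sum_apply, ite_apply])
    1 (Finset.mem_insert_self _ _)
  simpa using hcomb

theorem lEval_pow {K : Type*} [Field K] {r : ℕ} (F : (Fin r → ℤ) →₀ K) (t : Fin r → Kˣ)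
    (k : ℕ) :
    lEval F (t ^ k) =
      (F.mapDomain fun m => ∏ j, ((t j ^ m j : Kˣ) : K)).sum fun v c => c * v ^ k := by
  rw [lEval, Finsupp.sum_mapDomain_index (fun _ => zero_mul _) (fun _ _ _ => add_mul _ _ _)]
  refine Finsupp.sum_congr fun m _ => ?_
  rw [← Finset.prod_pow]
  congr! 2 with j
  rw [Pi.pow_apply, ← Units.val_pow_eq_pow_val, ← zpow_natCast, ← zpow_natCast, ← zpow_mul,
    ← zpow_mul, mul_comm]

theorem eq_zero_of_lEval_pow_eq_natCast_mul {K : Type*} [Field K] {r : ℕ}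
    (F : (Fin r → ℤ) →₀ K) (t : Fin r → Kˣ) {a : K}
    (h : ∀ k : ℕ, lEval F (t ^ k) = k * a) :
    a = 0 :=
  Finsupp.eq_zero_of_sum_mul_pow_eq_natCast_mul _ a fun k => by rw [← lEval_pow, h]

open MonoidAlgebra

section OrderGE

variable (R α : Type*) [CommRing R]

def orderGE (m : ℕ) : Submodule R (MonoidAlgebra R (FreeMonoid α)) where
  carrier := {x | ∀ w : FreeMonoid α, w.length < m → x.coeff w = 0}
  zero_mem' _ _ := rfl
  add_mem' hx hy w hw := by simp [coeff_add, hx w hw, hy w hw]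
  smul_mem' c x hx w hw := by simp [coeff_smul, hx w hw]

variable {R α}

theorem mem_orderGE {m : ℕ} {x : MonoidAlgebra R (FreeMonoid α)} :
    x ∈ orderGE R α m ↔ ∀ w : FreeMonoid α, w.length < m → x.coeff w = 0 := Iff.rfl

theorem orderGE_antitone : Antitone (orderGE R α) :=
  fun _ _ hpq _ hx w hw => hx w (lt_of_lt_of_le hw hpq)

theorem mem_orderGE_zero (x : MonoidAlgebra R (FreeMonoid α)) : x ∈ orderGE R α 0 :=
  fun _ h => absurd h (Nat.not_lt_zero _)

theorem coeff_single_of_length_ne {w v : FreeMonoid α} (c : R) (h : v.length ≠ w.length) :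
    (single w c).coeff v = 0 :=
  Finsupp.single_eq_of_ne' fun hwv => h (hwv ▸ rfl)

theorem single_mem_orderGE (w : FreeMonoid α) (c : R) : single w c ∈ orderGE R α w.length :=
  fun _ hv => coeff_single_of_length_ne c hv.ne

theorem mul_mem_orderGE {p q : ℕ} {x y : MonoidAlgebra R (FreeMonoid α)}
    (hx : x ∈ orderGE R α p) (hy : y ∈ orderGE R α q) : x * y ∈ orderGE R α (p + q) := by
  classical
  intro w hw
  rw [coeff_mul]
  refine Finset.sum_eq_zero fun u _ => Finset.sum_eq_zero fun v _ => ?_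
  dsimp only
  split_ifs with huv
  · have hlen : u.length + v.length = w.length := by rw [← FreeMonoid.length_mul, huv]
    rcases lt_or_ge u.length p with hu | hu
    · rw [hx u hu, zero_mul]
    · rw [hy v (by omega), mul_zero]
  · rfl

theorem mem_orderGE_two {x : MonoidAlgebra R (FreeMonoid α)} (h0 : x.coeff 1 = 0)
    (h1 : ∀ a, x.coeff (FreeMonoid.of a) = 0) : x ∈ orderGE R α 2 := by
  intro w hw
  obtain h | h : w.length = 0 ∨ w.length = 1 := by omega
  · rwa [FreeMonoid.length_eq_zero.mp h]
  · obtain ⟨a, rfl⟩ := FreeMonoid.length_eq_one.mp h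
    exact h1 a

theorem eq_zero_of_forall_mem_orderGE {x : MonoidAlgebra R (FreeMonoid α)}
    (hx : ∀ m, x ∈ orderGE R α m) : x = 0 :=
  coeff_injective (Finsupp.ext fun w => hx (w.length + 1) w (Nat.lt_succ_self _))

def FixesGeneratorsModOrder
    (φ : MonoidAlgebra R (FreeMonoid α) →ₐ[R] MonoidAlgebra R (FreeMonoid α)) (m : ℕ) : Prop :=
  ∀ a, φ (single (.of a) 1) - single (.of a) 1 ∈ orderGE R α m

end OrderGE

section Unipotent

variable {R α : Type*} [CommRing R]
  {φ : MonoidAlgebra R (FreeMonoid α) →ₐ[R] MonoidAlgebra R (FreeMonoid α)} {d : ℕ}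

theorem map_single_sub_mem_orderGE
    (hφ : FixesGeneratorsModOrder φ (d + 1)) (w : FreeMonoid α) :
    φ (single w 1) - single w 1 ∈ orderGE R α (w.length + d) := by
  induction w using FreeMonoid.inductionOn' with
  | one => simp [← one_def, zero_mem]
  | of_mul a w ih =>
    have hw : φ (single w 1) ∈ orderGE R α w.length := by
      simpa using add_mem (orderGE_antitone (Nat.le_add_right _ d) ih) (single_mem_orderGE w 1)
    have key : φ (single (.of a * w) 1) - single (.of a * w) 1
        = (φ (single (.of a) 1) - single (.of a) 1) * φ (single w 1)
          + single (.of a) 1 * (φ (single w 1) - single w 1) := by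
      rw [← one_mul (1 : R), ← single_mul_single, map_mul]; noncomm_ring
    rw [key, FreeMonoid.length_mul, FreeMonoid.length_of]
    refine add_mem ?_ ?_
    · exact orderGE_antitone (by omega) (mul_mem_orderGE (hφ a) hw)
    · exact orderGE_antitone (by rw [FreeMonoid.length_of]; omega)
        (mul_mem_orderGE (single_mem_orderGE _ 1) ih)

theorem map_sub_self_mem_orderGE
    (hφ : FixesGeneratorsModOrder φ (d + 1)) {m : ℕ}
    {x : MonoidAlgebra R (FreeMonoid α)} (hx : x ∈ orderGE R α m) :
    φ x - x ∈ orderGE R α (m + d) := by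
  rw [← sum_coeff_single x, map_finsuppSum, ← Finsupp.sum_sub]
  refine Submodule.finsuppSum_mem _ _ _ _ fun w hw => ?_
  have hmw : m ≤ w.length := not_lt.mp fun hlt => hw (hx w hlt)
  rw [← mul_one (x.coeff w), ← smul_eq_mul, ← smul_single, map_smul, ← smul_sub]
  exact Submodule.smul_mem _ _
    (orderGE_antitone (by omega) (map_single_sub_mem_orderGE hφ w))

theorem iterate_sub_sub_nsmul_mem_orderGE
    (hφ : FixesGeneratorsModOrder φ (d + 1)) {m : ℕ}
    {x : MonoidAlgebra R (FreeMonoid α)} (hx : x ∈ orderGE R α m) (k : ℕ) :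
    φ^[k] x - x - k • (φ x - x) ∈ orderGE R α (m + d + d) := by
  have hδ : φ x - x ∈ orderGE R α (m + d) := map_sub_self_mem_orderGE hφ hx
  induction k with
  | zero => simp [zero_mem]
  | succ k ih =>
    have hk : φ^[k] x - x ∈ orderGE R α (m + d) := by
      simpa using add_mem (orderGE_antitone (Nat.le_add_right _ d) ih)
        (Submodule.smul_of_tower_mem _ k hδ)
    have key : φ^[k + 1] x - x - (k + 1) • (φ x - x)
        = (φ^[k] x - x - k • (φ x - x)) + (φ (φ^[k] x - x) - (φ^[k] x - x)) := by
      rw [Function.iterate_succ_apply', map_sub, add_smul, one_smul]; abel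
    rw [key]
    exact add_mem ih (map_sub_self_mem_orderGE hφ hk)

theorem coeff_iterate_single_of
    (hφ : FixesGeneratorsModOrder φ (d + 1)) (hd : 1 ≤ d) (i : α)
    {w : FreeMonoid α} (hw : w.length = d + 1) (k : ℕ) :
    (φ^[k] (single (.of i) 1)).coeff w = k * (φ (single (.of i) 1)).coeff w := by
  have hrest := iterate_sub_sub_nsmul_mem_orderGE hφ (single_mem_orderGE (.of i) (1 : R)) k w
    (by rw [FreeMonoid.length_of]; omega)
  have hzi : (single (FreeMonoid.of i) (1 : R)).coeff w = 0 :=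
    coeff_single_of_length_ne 1 (by rw [FreeMonoid.length_of]; omega)
  simp only [coeff_sub, coeff_smul_apply, Finsupp.sub_apply, hzi, sub_zero] at hrest
  rw [nsmul_eq_mul] at hrest
  linear_combination hrest

theorem eq_id_of_forall_fixesGeneratorsModOrder (h : ∀ m, FixesGeneratorsModOrder φ m) :
    φ = AlgHom.id R _ :=
  AlgHom.ext fun x => sub_eq_zero.mp <| eq_zero_of_forall_mem_orderGE fun m => by
    simpa using map_sub_self_mem_orderGE (h (m + 1)) (mem_orderGE_zero x)

theorem exists_coeff_ne_zero_of_ne_id (h2 : FixesGeneratorsModOrder φ 2)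
    (hne : φ ≠ AlgHom.id R _) :
    ∃ d, 1 ≤ d ∧ FixesGeneratorsModOrder φ (d + 1) ∧
      ∃ i w, w.length = d + 1 ∧ (φ (single (.of i) 1)).coeff w ≠ 0 := by
  classical
  have hP : ∃ m, ¬FixesGeneratorsModOrder φ m := by
    by_contra! h
    exact hne (eq_id_of_forall_fixesGeneratorsModOrder h)
  obtain ⟨m, hm, hmin⟩ :
      ∃ m, ¬FixesGeneratorsModOrder φ m ∧ ∀ m' < m, FixesGeneratorsModOrder φ m' :=
    ⟨Nat.find hP, Nat.find_spec hP, fun m' hm' => not_not.mp (Nat.find_min hP hm')⟩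
  have h3 : 3 ≤ m := by
    by_contra! h
    exact hm fun a => orderGE_antitone (by omega) (h2 a)
  obtain ⟨i, w, hw, hc⟩ : ∃ i, ∃ w : FreeMonoid α, w.length < m ∧
      (φ (single (.of i) 1) - single (FreeMonoid.of i) 1).coeff w ≠ 0 := by
    simpa [FixesGeneratorsModOrder, mem_orderGE] using hm
  have hw' : w.length = m - 1 := by
    by_contra h
    exact hc (hmin (m - 1) (by omega) i w (by omega))
  refine ⟨m - 2, by omega, hmin _ (by omega), i, w, by omega, ?_⟩
  rwa [coeff_sub, Finsupp.sub_apply, coeff_single_of_length_ne _ (by simp; omega), sub_zero] at hc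

end Unipotent

theorem FreeAlgebra.equivMonoidAlgebraFreeMonoid_ι {R X : Type*} [CommSemiring R] (x : X) :
    equivMonoidAlgebraFreeMonoid (ι R x) = single (FreeMonoid.of x) 1 := by
  simp [equivMonoidAlgebraFreeMonoid, of_apply]

theorem torusAction_eq_one_of_unipotent {K α : Type*} [Field K] {r : ℕ}
    (τ : (Fin r → Kˣ) →*
      (MonoidAlgebra K (FreeMonoid α) ≃ₐ[K] MonoidAlgebra K (FreeMonoid α)))
    (hlaurent : ∀ i w, ∃ F : (Fin r → ℤ) →₀ K,
      ∀ t, (τ t (single (FreeMonoid.of i) 1)).coeff w = lEval F t)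
    (hunip : ∀ t, FixesGeneratorsModOrder (τ t).toAlgHom 2) (t : Fin r → Kˣ) :
    τ t = 1 := by
  by_contra hne
  obtain ⟨d, hd, hlow, i, w, hw, hc⟩ := exists_coeff_ne_zero_of_ne_id (φ := (τ t).toAlgHom)
    (hunip t) fun h => hne (AlgEquiv.ext fun x => DFunLike.congr_fun h x)
  obtain ⟨F, hF⟩ := hlaurent i w
  refine hc (eq_zero_of_lEval_pow_eq_natCast_mul F t fun k => ?_)
  rw [← hF, map_pow, AlgEquiv.coe_pow]
  exact coeff_iterate_single_of hlow hd i hw k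

theorem unipotent_regular_torus_action_is_trivial_general
    {K : Type*} [Field K] (r n : ℕ)
    (σ : (Fin r → Kˣ) →* (FreeAlgebra K (Fin n) ≃ₐ[K] FreeAlgebra K (Fin n)))
    (hreg : IsRegularAction σ)
    (hconst : ∀ (t : Fin r → Kˣ) (i : Fin n), coeffW (σ t (FreeAlgebra.ι K i)) 1 = 0)
    (hlin : ∀ (t : Fin r → Kˣ) (i j : Fin n),
      coeffW (σ t (FreeAlgebra.ι K i)) (FreeMonoid.of j) = if j = i then 1 else 0) :
    ∀ t, σ t = 1 := by
  let e := FreeAlgebra.equivMonoidAlgebraFreeMonoid (R := K) (X := Fin n)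
  let τ := (AlgEquiv.autCongr e).toMonoidHom.comp σ
  have hτ (t i w) : (τ t (single (.of i) 1)).coeff w = coeffW (σ t (FreeAlgebra.ι K i)) w := by
    rw [← FreeAlgebra.equivMonoidAlgebraFreeMonoid_ι]
    simp [τ, e, coeffW]
  have hτ1 := torusAction_eq_one_of_unipotent τ (fun i w => by simpa only [hτ] using hreg.1 i w)
    fun t a => mem_orderGE_two (by simp [hτ, hconst]) fun j => by
      rcases eq_or_ne j a with rfl | hja
      · simp [hτ, hlin]
      · simp [hτ, hlin, hja, Finsupp.single_eq_of_ne, FreeMonoid.of_injective.ne hja]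
  intro t
  exact (AlgEquiv.autCongr e).map_eq_one_iff.mp (hτ1 t)

/-- If a regular torus action on the free algebra satisfies
`σ(t)(z_i) = z_i + (terms of degree ≥ 2)` for every `t` and `i`, then `σ(t)` is the
identity automorphism for every `t`. -/
theorem unipotent_regular_torus_action_is_trivial
    {K : Type*} [Field K] [IsAlgClosed K] (r n : ℕ)
    (σ : (Fin r → Kˣ) →* (FreeAlgebra K (Fin n) ≃ₐ[K] FreeAlgebra K (Fin n)))
    (hreg : IsRegularAction σ)
    (hconst : ∀ (t : Fin r → Kˣ) (i : Fin n), coeffW (σ t (FreeAlgebra.ι K i)) 1 = 0)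
    (hlin : ∀ (t : Fin r → Kˣ) (i j : Fin n),
      coeffW (σ t (FreeAlgebra.ι K i)) (FreeMonoid.of j) = if j = i then 1 else 0) :
    ∀ t, σ t = 1 :=
  unipotent_regular_torus_action_is_trivial_general r n σ hreg hconst hlin
end
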